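/- Let μ be Lebesgue measure on [0,1] and let N be as defined below. Let m, n, k ≥ 1 be natural numbers and ε > 0. Suppose Y, Z, U₁, …, U_m, V₁, …, V_m are nonnegative integrable functions on [0,1] such that N(Z) < ε, U_i ~ V_i for i = 1, …, m, and U := Σ_{i=1}^m U_i satisfies U ≥ Y − Z + Σ_{i=1}^m V_i almost everywhere. Then for every measurable set A ⊆ [0,1] with μ(A) ≤ 1/((m+1)^k·2^n·n!), there exists a measurable set A' ⊇ A with μ(A') ≤ (m+1)^k·μ(A) such that ∫_{A'} U dμ ≥ k·∫_A Y dμ + ∫_A U dμ − k·ε/(n·2^n). -/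

import Mathlib

open MeasureTheory ProbabilityTheory
open scoped ENNReal

/-- Lebesgue measure on `[0,1]`. -/
noncomputable def μ01 : Measure ℝ := volume.restrict (Set.Icc (0 : ℝ) 1)

instance : IsFiniteMeasure μ01 := by
  constructor
  rw [μ01, Measure.restrict_apply MeasurableSet.univ, Set.univ_inter, Real.volume_Icc]
  simp

instance : NullSingletonClass μ01 := by
  rw [μ01]; infer_instance

lemma mu01_le_volume (S : Set ℝ) (hS : MeasurableSet S) : μ01 S ≤ volume S := by
  rw [μ01, Measure.restrict_apply hS]
  exact measure_mono Set.inter_subset_left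

/-- Sierpiński-type: any measurable set contains a subset of any smaller measure. -/
lemma exists_subset_mu01_eq {W : Set ℝ} (hW : MeasurableSet W) {r : ℝ≥0∞} (hr : r ≤ μ01 W) :
    ∃ E, MeasurableSet E ∧ E ⊆ W ∧ μ01 E = r := by
  have hfin : ∀ S : Set ℝ, μ01 S ≠ ∞ := fun S => measure_ne_top _ _
  set f : ℝ → ℝ := fun t => (μ01 (W ∩ Set.Iic t)).toReal with hf
  have hstep : ∀ x y : ℝ, y ≤ x → f y ≤ f x ∧ f x ≤ f y + (x - y) := by
    intro x y hyx
    constructor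
    · exact ENNReal.toReal_mono (hfin _)
        (measure_mono (Set.inter_subset_inter_right _ (Set.Iic_subset_Iic.mpr hyx)))
    · have h1 : μ01 (W ∩ Set.Iic x) ≤ μ01 (W ∩ Set.Iic y) + ENNReal.ofReal (x - y) := by
        have hsub : W ∩ Set.Iic x ⊆ (W ∩ Set.Iic y) ∪ Set.Ioc y x := by
          intro z hz
          rcases le_or_gt z y with h | h
          · exact Or.inl ⟨hz.1, h⟩
          · exact Or.inr ⟨h, hz.2⟩
        calc μ01 (W ∩ Set.Iic x) ≤ μ01 ((W ∩ Set.Iic y) ∪ Set.Ioc y x) := measure_mono hsub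
          _ ≤ μ01 (W ∩ Set.Iic y) + μ01 (Set.Ioc y x) := measure_union_le _ _
          _ ≤ μ01 (W ∩ Set.Iic y) + ENNReal.ofReal (x - y) := by
              gcongr
              calc μ01 (Set.Ioc y x) ≤ volume (Set.Ioc y x) :=
                    mu01_le_volume _ measurableSet_Ioc
                _ = ENNReal.ofReal (x - y) := by rw [Real.volume_Ioc]
      calc f x ≤ (μ01 (W ∩ Set.Iic y) + ENNReal.ofReal (x - y)).toReal :=
            ENNReal.toReal_mono (by finiteness) h1
        _ = f y + (x - y) := by
            rw [ENNReal.toReal_add (hfin _) ENNReal.ofReal_ne_top,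
              ENNReal.toReal_ofReal (by linarith)]
  have hcont : Continuous f := by
    have : LipschitzWith 1 f := by
      apply LipschitzWith.of_dist_le_mul
      intro x y
      rw [Real.dist_eq, Real.dist_eq, NNReal.coe_one, one_mul]
      rcases le_total y x with h | h
      · obtain ⟨h1, h2⟩ := hstep x y h
        rw [abs_of_nonneg (by linarith), abs_of_nonneg (by linarith)]
        linarith
      · obtain ⟨h1, h2⟩ := hstep y x h
        rw [abs_of_nonpos (by linarith), abs_of_nonpos (by linarith)]
        linarith
    exact this.continuous
  have h0 : f (-1) = 0 := by
    have : μ01 (W ∩ Set.Iic (-1)) = 0 := by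
      refine le_antisymm ?_ zero_le
      calc μ01 (W ∩ Set.Iic (-1)) ≤ volume (Set.Iic (-1) ∩ Set.Icc (0:ℝ) 1) := by
            rw [μ01, Measure.restrict_apply (hW.inter measurableSet_Iic)]
            exact measure_mono (by intro z hz; exact ⟨hz.1.2, hz.2⟩)
        _ = 0 := by
            convert measure_empty
            · ext z; simp only [Set.mem_inter_iff, Set.mem_Iic, Set.mem_Icc, Set.mem_empty_iff_false,
                iff_false, not_and]
              intro h1 h2 h3; linarith
            · infer_instance
    rw [hf]; simp [this]
  have h2' : μ01 W ≤ μ01 (W ∩ Set.Iic 2) := by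
    have hd : μ01 (W \ Set.Iic 2) = 0 := by
      refine le_antisymm ?_ zero_le
      calc μ01 (W \ Set.Iic 2) ≤ volume ((Set.Iic (2:ℝ))ᶜ ∩ Set.Icc (0:ℝ) 1) := by
            rw [μ01, Measure.restrict_apply (hW.diff measurableSet_Iic)]
            exact measure_mono (by intro z hz; exact ⟨hz.1.2, hz.2⟩)
        _ = 0 := by
            convert measure_empty
            · ext z; simp only [Set.mem_inter_iff, Set.mem_compl_iff, Set.mem_Iic, Set.mem_Icc,
                Set.mem_empty_iff_false, iff_false, not_and, not_le]
              intro h1 h2; linarith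
            · infer_instance
    calc μ01 W ≤ μ01 (W ∩ Set.Iic 2) + μ01 (W \ Set.Iic 2) :=
          measure_le_inter_add_diff _ _ _
      _ = μ01 (W ∩ Set.Iic 2) := by rw [hd, add_zero]
  have hrtop : r ≠ ∞ := ne_top_of_le_ne_top (hfin W) hr
  have hmem : r.toReal ∈ Set.Icc (f (-1)) (f 2) := by
    rw [h0]
    constructor
    · exact ENNReal.toReal_nonneg
    · exact ENNReal.toReal_mono (hfin _) (hr.trans h2')
  obtain ⟨t, _, ht⟩ := intermediate_value_Icc (by norm_num : (-1:ℝ) ≤ 2) hcont.continuousOn hmem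
  refine ⟨W ∩ Set.Iic t, hW.inter measurableSet_Iic, Set.inter_subset_left, ?_⟩
  have := ht
  rw [hf] at this
  exact (ENNReal.toReal_eq_toReal_iff' (hfin _) hrtop).mp this
/-- The Hardy–Littlewood transfer lemma: if `U ~ V` then for any measurable `C` there is a
measurable `B` with `μ01 B ≤ μ01 C` and `∫_C U ≤ ∫_B V`. -/
lemma transfer_lemma (U V : ℝ → ℝ) (hU : Integrable U μ01) (hV : Integrable V μ01)
    (hU0 : ∀ᵐ t ∂μ01, 0 ≤ U t) (hid : IdentDistrib U V μ01 μ01)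
    (C : Set ℝ) (hC : MeasurableSet C) :
    ∃ B, MeasurableSet B ∧ μ01 B ≤ μ01 C ∧ (∫ t in C, U t ∂μ01) ≤ ∫ t in B, V t ∂μ01 := by
  have hfin : ∀ S : Set ℝ, μ01 S ≠ ∞ := fun S => measure_ne_top _ _
  -- measurable representatives
  set U' : ℝ → ℝ := hid.aemeasurable_fst.mk U with hU'def
  set V' : ℝ → ℝ := hid.aemeasurable_snd.mk V with hV'def
  have hU'm : Measurable U' := hid.aemeasurable_fst.measurable_mk
  have hV'm : Measurable V' := hid.aemeasurable_snd.measurable_mk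
  have hUU' : U =ᵐ[μ01] U' := hid.aemeasurable_fst.ae_eq_mk
  have hVV' : V =ᵐ[μ01] V' := hid.aemeasurable_snd.ae_eq_mk
  have hid' : IdentDistrib U' V' μ01 μ01 :=
    ((IdentDistrib.of_ae_eq hid.aemeasurable_fst hUU').symm.trans hid).trans
      (IdentDistrib.of_ae_eq hid.aemeasurable_snd hVV')
  have hU' : Integrable U' μ01 := hU.congr hUU'
  have hV' : Integrable V' μ01 := hV.congr hVV'
  have hU0' : ∀ᵐ t ∂μ01, 0 ≤ U' t := by
    filter_upwards [hU0, hUU'] with t h1 h2; rw [← h2]; exact h1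
  have hCU : (∫ t in C, U t ∂μ01) = ∫ t in C, U' t ∂μ01 :=
    integral_congr_ae (ae_restrict_of_ae hUU')
  -- it suffices to find B for the representatives
  suffices h : ∃ B, MeasurableSet B ∧ μ01 B ≤ μ01 C ∧
      (∫ t in C, U' t ∂μ01) ≤ ∫ t in B, V' t ∂μ01 by
    obtain ⟨B, hBm, hBμ, hBi⟩ := h
    exact ⟨B, hBm, hBμ, by
      rw [hCU, show (∫ t in B, V t ∂μ01) = ∫ t in B, V' t ∂μ01 from
        integral_congr_ae (ae_restrict_of_ae hVV')]
      exact hBi⟩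
  set s : ℝ≥0∞ := μ01 C with hs
  rcases eq_or_ne s 0 with hs0 | hs0
  · refine ⟨∅, MeasurableSet.empty, by simp, ?_⟩
    have : μ01.restrict C = 0 := Measure.restrict_eq_zero.mpr hs0
    rw [this]
    simp
  -- the threshold
  set S : Set ℝ := {t : ℝ | 0 ≤ t ∧ μ01 {x | t < U' x} ≤ s} with hS
  have hSne : S.Nonempty := by
    set I : ℝ≥0∞ := ∫⁻ x, ENNReal.ofReal (U' x) ∂μ01 with hI
    have hItop : I ≠ ∞ := hU'.lintegral_lt_top.ne
    set t₀ : ℝ := (I / s).toReal + 1 with ht₀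
    have ht₀0 : 0 ≤ t₀ := by positivity
    refine ⟨t₀, ht₀0, ?_⟩
    by_contra hcon
    push_neg at hcon
    have hmark : ENNReal.ofReal t₀ * μ01 {x | t₀ < U' x} ≤ I := by
      have hms : MeasurableSet {x | t₀ < U' x} := measurableSet_lt measurable_const hU'm
      calc ENNReal.ofReal t₀ * μ01 {x | t₀ < U' x}
          = ∫⁻ _ in {x | t₀ < U' x}, ENNReal.ofReal t₀ ∂μ01 := by
            rw [setLIntegral_const]
        _ ≤ ∫⁻ x in {x | t₀ < U' x}, ENNReal.ofReal (U' x) ∂μ01 := by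
            refine setLIntegral_mono (ENNReal.measurable_ofReal.comp hU'm) ?_
            intro x hx
            exact ENNReal.ofReal_le_ofReal (le_of_lt hx)
        _ ≤ I := setLIntegral_le_lintegral _ _
    have hIs : I / s < ENNReal.ofReal t₀ := by
      rw [ENNReal.lt_ofReal_iff_toReal_lt (ENNReal.div_lt_top hItop hs0).ne]
      rw [ht₀]; linarith
    have : I < ENNReal.ofReal t₀ * μ01 {x | t₀ < U' x} := by
      calc I = I / s * s := (ENNReal.div_mul_cancel hs0 (hfin C)).symm
        _ < ENNReal.ofReal t₀ * s := by
            exact ENNReal.mul_lt_mul_left hs0 (hfin C) hIs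
        _ ≤ ENNReal.ofReal t₀ * μ01 {x | t₀ < U' x} := by
            exact mul_le_mul_right hcon.le _
    exact absurd hmark (not_le.mpr this)
  have hSbdd : BddBelow S := ⟨0, fun t ht => ht.1⟩
  set lam : ℝ := sInf S with hlam
  have hlam0 : 0 ≤ lam := le_csInf hSne fun t ht => ht.1
  have hkey : ∀ t, lam < t → μ01 {x | t < U' x} ≤ s := by
    intro t ht
    obtain ⟨t', ht'S, ht'lt⟩ := exists_lt_of_csInf_lt hSne ht
    exact le_trans (measure_mono fun x hx => lt_trans ht'lt hx) ht'S.2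
  have h1 : μ01 {x | lam < U' x} ≤ s := by
    have hun : {x | lam < U' x} = ⋃ nn : ℕ, {x | lam + 1 / (nn + 1) < U' x} := by
      ext x
      simp only [Set.mem_setOf_eq, Set.mem_iUnion]
      constructor
      · intro hx
        obtain ⟨nn, hnn⟩ := exists_nat_one_div_lt (sub_pos.mpr hx)
        exact ⟨nn, by linarith⟩
      · rintro ⟨nn, hnn⟩
        have : (0:ℝ) < 1 / (nn + 1) := by positivity
        linarith
    have hmono : Monotone fun nn : ℕ => {x | lam + 1 / (nn + 1 : ℝ) < U' x} := by
      intro a b hab x hx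
      simp only [Set.mem_setOf_eq] at hx ⊢
      have : (1:ℝ) / (b + 1) ≤ 1 / (a + 1) := by
        apply one_div_le_one_div_of_le (by positivity)
        exact_mod_cast by omega
      linarith
    rw [hun, hmono.measure_iUnion]
    refine iSup_le fun nn => hkey _ (lt_add_of_pos_right lam (by positivity))
  have h2 : s ≤ μ01 {x | lam ≤ U' x} := by
    rcases eq_or_lt_of_le hlam0 with hlz | hlz
    · -- lam = 0
      have hce : μ01 {x | ¬ (0:ℝ) ≤ U' x} = 0 := ae_iff.mp hU0'
      have hmeas0 : MeasurableSet {x : ℝ | 0 ≤ U' x} := measurableSet_le measurable_const hU'm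
      have : μ01 {x : ℝ | 0 ≤ U' x} + μ01 {x : ℝ | 0 ≤ U' x}ᶜ = μ01 Set.univ :=
        measure_add_measure_compl hmeas0
      rw [show ({x : ℝ | 0 ≤ U' x}ᶜ : Set ℝ) = {x | ¬ (0:ℝ) ≤ U' x} from rfl, hce,
        add_zero] at this
      rw [← hlz]
      calc s ≤ μ01 Set.univ := measure_mono (Set.subset_univ _)
        _ = μ01 {x : ℝ | 0 ≤ U' x} := this.symm
    · -- 0 < lam
      set tset : ℕ → Set ℝ := fun nn => {x | lam - lam / (nn + 1) < U' x} with htset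
      have hanti : Antitone tset := by
        intro a b hab x hx
        simp only [htset, Set.mem_setOf_eq] at hx ⊢
        have hle : lam / (b + 1) ≤ lam / (a + 1) := by
          apply div_le_div_of_nonneg_left hlam0 (by positivity)
          exact_mod_cast by omega
        linarith
      have hiInter : {x | lam ≤ U' x} = ⋂ nn : ℕ, tset nn := by
        ext x
        simp only [Set.mem_setOf_eq, Set.mem_iInter, htset]
        constructor
        · intro hx nn
          have : (0:ℝ) < lam / (nn + 1) := by positivity
          linarith
        · intro hx
          by_contra hcon
          push_neg at hcon
          have hpos : (0:ℝ) < lam - U' x := by linarith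
          obtain ⟨nn, hnn⟩ := exists_nat_gt (lam / (lam - U' x))
          have hnn1 : lam / (lam - U' x) < (nn:ℝ) + 1 := by linarith
          have : lam / ((nn:ℝ) + 1) < lam - U' x := by
            rw [div_lt_iff₀ (by positivity)]
            calc lam = lam / (lam - U' x) * (lam - U' x) := by field_simp
              _ < ((nn:ℝ) + 1) * (lam - U' x) := by
                  apply mul_lt_mul_of_pos_right hnn1 hpos
              _ = (lam - U' x) * ((nn:ℝ) + 1) := by ring
          have := hx nn
          linarith
      have heach : ∀ nn : ℕ, s ≤ μ01 (tset nn) := by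
        intro nn
        have htpos : (0:ℝ) < lam / (nn + 1) := by positivity
        have hlt : lam - lam / (nn + 1) < lam := by linarith
        have hnotS : (lam - lam / (nn + 1)) ∉ S := fun hmem => absurd (csInf_le hSbdd hmem)
          (not_le.mpr (hlam ▸ hlt))
        have h0t : (0:ℝ) ≤ lam - lam / (nn + 1) := by
          have : lam / (nn + 1) ≤ lam / 1 := by
            apply div_le_div_of_nonneg_left hlam0 one_pos
            exact_mod_cast by omega
          simp only [div_one] at this
          linarith
        rw [hS] at hnotS
        simp only [Set.mem_setOf_eq, not_and, not_le] at hnotS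
        exact (hnotS h0t).le
      have hd : Directed (· ⊇ ·) tset := hanti.directed_ge
      have hmeasInter : μ01 (⋂ nn, tset nn) = ⨅ nn, μ01 (tset nn) :=
        Directed.measure_iInter
          (fun nn => (measurableSet_lt measurable_const hU'm).nullMeasurableSet) hd
          ⟨0, hfin _⟩
      rw [hiInter, hmeasInter]
      exact le_iInf heach
  -- transfer to V'
  set T : Set ℝ := {x | lam < U' x} with hT
  set TV : Set ℝ := {x | lam < V' x} with hTV
  set W : Set ℝ := {x | V' x = lam} with hW
  have hTm : MeasurableSet T := measurableSet_lt measurable_const hU'm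
  have hTVm : MeasurableSet TV := measurableSet_lt measurable_const hV'm
  have hWm : MeasurableSet W := hV'm (measurableSet_singleton lam)
  have hμTV : μ01 TV = μ01 T := by
    have := hid'.measure_mem_eq (measurableSet_Ioi (a := lam))
    exact this.symm
  have hμIci : μ01 {x | lam ≤ V' x} = μ01 {x | lam ≤ U' x} :=
    (hid'.measure_mem_eq (measurableSet_Ici (a := lam))).symm
  set r : ℝ≥0∞ := s - μ01 T with hr
  have hμTle : μ01 T ≤ s := h1
  have hrW : r ≤ μ01 W := by
    have hWeq : W = {x | lam ≤ V' x} \ TV := by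
      ext x
      simp only [hW, hTV, Set.mem_setOf_eq, Set.mem_diff, not_lt]
      constructor
      · intro h; exact ⟨h.ge, h.le⟩
      · intro h; exact le_antisymm h.2 h.1
    have hsub : TV ⊆ {x | lam ≤ V' x} := fun x hx => show lam ≤ V' x from le_of_lt hx
    have : μ01 W = μ01 {x | lam ≤ V' x} - μ01 TV := by
      rw [hWeq]
      exact measure_diff hsub hTVm.nullMeasurableSet (hfin _)
    rw [this, hμTV, hμIci]
    exact tsub_le_tsub h2 le_rfl
  obtain ⟨E, hEm, hEW, hEμ⟩ := exists_subset_mu01_eq hWm hrW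
  refine ⟨TV ∪ E, hTVm.union hEm, ?_, ?_⟩
  · calc μ01 (TV ∪ E) ≤ μ01 TV + μ01 E := measure_union_le _ _
      _ = μ01 T + r := by rw [hμTV, hEμ]
      _ = s := by rw [hr]; exact add_tsub_cancel_of_le hμTle
      _ ≤ μ01 C := le_rfl
  · -- the integral inequality
    set g : ℝ → ℝ := fun y => if lam < y then y else 0 with hg
    have hgm : Measurable g := by
      apply Measurable.ite _ measurable_id measurable_const
      exact measurableSet_Ioi
    have hgid : (∫ x, g (U' x) ∂μ01) = ∫ x, g (V' x) ∂μ01 := (hid'.comp hgm).integral_eq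
    have hindU : (fun x => g (U' x)) = T.indicator U' := by
      funext x
      by_cases hx : lam < U' x
      · simp [hg, hx, Set.indicator_of_mem (show x ∈ T from hx)]
      · simp [hg, hx, Set.indicator_of_notMem (show x ∉ T from hx)]
    have hindV : (fun x => g (V' x)) = TV.indicator V' := by
      funext x
      by_cases hx : lam < V' x
      · simp [hg, hx, Set.indicator_of_mem (show x ∈ TV from hx)]
      · simp [hg, hx, Set.indicator_of_notMem (show x ∉ TV from hx)]
    have hTint : (∫ x in T, U' x ∂μ01) = ∫ x in TV, V' x ∂μ01 := by
      rw [← integral_indicator hTm, ← integral_indicator hTVm, ← hindU, ← hindV]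
      exact hgid
    have hEint : (∫ x in E, V' x ∂μ01) = lam * (μ01 E).toReal := by
      have : ∀ x ∈ E, V' x = lam := fun x hx => hEW hx
      rw [setIntegral_congr_fun hEm this, setIntegral_const, smul_eq_mul, mul_comm, measureReal_def]
    have hdisj : Disjoint TV E := by
      rw [Set.disjoint_left]
      intro x hx1 hx2
      have := hEW hx2
      simp only [hW, Set.mem_setOf_eq] at this
      simp only [hTV, Set.mem_setOf_eq] at hx1
      linarith
    have hBint : (∫ x in TV ∪ E, V' x ∂μ01) =
        (∫ x in TV, V' x ∂μ01) + ∫ x in E, V' x ∂μ01 :=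
      setIntegral_union hdisj hEm hV'.integrableOn hV'.integrableOn
    -- measure bookkeeping in ℝ
    have hsplitC : μ01 (C ∩ T) + μ01 (C \ T) = μ01 C := measure_inter_add_diff C hTm
    have hsplitT : μ01 (T ∩ C) + μ01 (T \ C) = μ01 T := measure_inter_add_diff T hC
    set a : ℝ := (μ01 (C ∩ T)).toReal with ha
    set sR : ℝ := s.toReal with hsR
    set tR : ℝ := (μ01 T).toReal with htR
    have hCdiff : (μ01 (C \ T)).toReal = sR - a := by
      have := congrArg ENNReal.toReal hsplitC
      rw [ENNReal.toReal_add (hfin _) (hfin _)] at this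
      rw [hsR, ha]; linarith
    have hTdiff : (μ01 (T \ C)).toReal = tR - a := by
      have := congrArg ENNReal.toReal hsplitT
      rw [ENNReal.toReal_add (hfin _) (hfin _)] at this
      rw [htR, ha, Set.inter_comm]; linarith
    have hrR : (μ01 E).toReal = sR - tR := by
      rw [hEμ, hr, ENNReal.toReal_sub_of_le hμTle (hfin _)]
    -- integral bookkeeping
    have hsplitCint : (∫ x in C, U' x ∂μ01) =
        (∫ x in C ∩ T, U' x ∂μ01) + ∫ x in C \ T, U' x ∂μ01 :=
      (integral_inter_add_diff hTm hU'.integrableOn).symm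
    have hsplitTint : (∫ x in T, U' x ∂μ01) =
        (∫ x in T ∩ C, U' x ∂μ01) + ∫ x in T \ C, U' x ∂μ01 :=
      (integral_inter_add_diff hC hU'.integrableOn).symm
    have hbound1 : (∫ x in C \ T, U' x ∂μ01) ≤ lam * (sR - a) := by
      have hb : ∀ x ∈ C \ T, U' x ≤ lam := by
        intro x hx
        have : ¬ lam < U' x := hx.2
        linarith [not_lt.mp this]
      calc (∫ x in C \ T, U' x ∂μ01) ≤ ∫ _ in C \ T, lam ∂μ01 := by
            apply setIntegral_mono_on hU'.integrableOn (integrableOn_const (hfin _)) (hC.diff hTm) hb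
        _ = (μ01 (C \ T)).toReal * lam := by rw [setIntegral_const, smul_eq_mul, measureReal_def]
        _ = lam * (sR - a) := by rw [hCdiff, mul_comm]
    have hbound2 : lam * (tR - a) ≤ ∫ x in T \ C, U' x ∂μ01 := by
      have hb : ∀ x ∈ T \ C, lam ≤ U' x := by
        intro x hx
        exact le_of_lt hx.1
      calc lam * (tR - a) = (μ01 (T \ C)).toReal * lam := by rw [hTdiff, mul_comm]
        _ = ∫ _ in T \ C, lam ∂μ01 := by rw [setIntegral_const, smul_eq_mul, measureReal_def]
        _ ≤ ∫ x in T \ C, U' x ∂μ01 := by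
            apply setIntegral_mono_on (integrableOn_const (hfin _)) hU'.integrableOn (hTm.diff hC) hb
    have hinterint : (∫ x in C ∩ T, U' x ∂μ01) = ∫ x in T ∩ C, U' x ∂μ01 := by
      rw [Set.inter_comm]
    have hring : lam * (sR - a) = lam * (tR - a) + lam * (sR - tR) := by ring
    calc (∫ t in C, U' t ∂μ01)
        ≤ (∫ x in C ∩ T, U' x ∂μ01) + lam * (sR - a) := by
          rw [hsplitCint]; linarith
      _ ≤ (∫ x in T ∩ C, U' x ∂μ01) + (∫ x in T \ C, U' x ∂μ01) + lam * (sR - tR) := by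
          rw [hinterint] at *
          linarith
      _ = (∫ x in T, U' x ∂μ01) + lam * (sR - tR) := by rw [hsplitTint]
      _ = (∫ x in TV, V' x ∂μ01) + (∫ x in E, V' x ∂μ01) := by
          rw [hTint, hEint, hrR]
      _ = ∫ t in TV ∪ E, V' t ∂μ01 := hBint.symm


/-- The rearrangement-invariant norm
`N(f) = sup_{n ≥ 1} n·2ⁿ · sup {∫_A |f| dμ : A ⊆ [0,1] measurable, μ(A) ≤ 1/(2ⁿ·n!)}`. -/
noncomputable def Nnorm (f : ℝ → ℝ) : ℝ≥0∞ :=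
  ⨆ (n : ℕ) (_ : 1 ≤ n),
    ((n : ℝ≥0∞) * 2 ^ n) *
      ⨆ (A : Set ℝ) (_ : MeasurableSet A) (_ : A ⊆ Set.Icc (0 : ℝ) 1)
        (_ : μ01 A ≤ 1 / ((2 : ℝ≥0∞) ^ n * (Nat.factorial n : ℝ≥0∞))),
        ∫⁻ t in A, ENNReal.ofReal |f t| ∂μ01

lemma zbound (Z : ℝ → ℝ) (hZ : Integrable Z μ01) (n : ℕ) (hn : 1 ≤ n) (ε : ℝ) (hε : 0 < ε)
    (hNZ : Nnorm Z ≤ ENNReal.ofReal ε) (D : Set ℝ) (hD : MeasurableSet D)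
    (hDμ : μ01 D ≤ 1 / ((2 : ℝ≥0∞) ^ n * (Nat.factorial n : ℝ≥0∞))) :
    (∫ t in D, Z t ∂μ01) ≤ ε / ((n : ℝ) * 2 ^ n) := by
  set D' : Set ℝ := D ∩ Set.Icc (0:ℝ) 1 with hD'
  have hD'm : MeasurableSet D' := hD.inter measurableSet_Icc
  have hres : μ01.restrict D = μ01.restrict D' := by
    rw [μ01, Measure.restrict_restrict hD, Measure.restrict_restrict hD'm, hD',
      Set.inter_assoc, Set.inter_self]
  set L : ℝ≥0∞ := ∫⁻ t in D', ENNReal.ofReal |Z t| ∂μ01 with hL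
  set c : ℝ≥0∞ := (n : ℝ≥0∞) * 2 ^ n with hc
  have hc0 : c ≠ 0 := by
    rw [hc]
    apply mul_ne_zero
    · have : (0:ℕ) < n := hn
      exact_mod_cast this.ne'
    · positivity
  have hctop : c ≠ ∞ := by
    rw [hc]
    apply ENNReal.mul_ne_top (ENNReal.natCast_ne_top n)
    exact ENNReal.pow_ne_top ENNReal.ofNat_ne_top
  have hLmem : c * L ≤ Nnorm Z := by
    rw [Nnorm]
    refine le_iSup_of_le n ?_
    refine le_iSup_of_le hn ?_
    refine mul_le_mul_right ?_ _
    refine le_iSup_of_le D' ?_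
    refine le_iSup_of_le hD'm ?_
    refine le_iSup_of_le Set.inter_subset_right ?_
    refine le_iSup_of_le (le_trans (measure_mono Set.inter_subset_left) hDμ) le_rfl
  have hL2 : L ≤ ENNReal.ofReal ε / c := by
    rw [ENNReal.le_div_iff_mul_le (Or.inl hc0) (Or.inl hctop), mul_comm]
    exact hLmem.trans hNZ
  have habs : (∫ t in D', |Z t| ∂μ01) = L.toReal := by
    rw [hL, integral_eq_lintegral_of_nonneg_ae]
    · exact Filter.Eventually.of_forall fun t => abs_nonneg _
    · exact hZ.abs.aestronglyMeasurable.restrict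
  have hfinL : ENNReal.ofReal ε / c ≠ ∞ := by
    exact (ENNReal.div_lt_top ENNReal.ofReal_ne_top hc0).ne
  calc (∫ t in D, Z t ∂μ01) = ∫ t in D', Z t ∂μ01 := by rw [hres]
    _ ≤ ∫ t in D', |Z t| ∂μ01 := by
        apply setIntegral_mono hZ.integrableOn hZ.abs.integrableOn
        intro x; exact le_abs_self _
    _ = L.toReal := habs
    _ ≤ (ENNReal.ofReal ε / c).toReal := ENNReal.toReal_mono hfinL hL2
    _ = ε / ((n : ℝ) * 2 ^ n) := by
        rw [ENNReal.toReal_div, ENNReal.toReal_ofReal hε.le, hc, ENNReal.toReal_mul,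
          ENNReal.toReal_pow]
        norm_num
lemma step_lemma (m n : ℕ) (hn : 1 ≤ n) (ε : ℝ) (hε : 0 < ε)
    (Y Z : ℝ → ℝ) (U V : Fin m → ℝ → ℝ)
    (hY : Integrable Y μ01) (hY0 : ∀ᵐ t ∂μ01, 0 ≤ Y t)
    (hZ : Integrable Z μ01)
    (hU : ∀ i, Integrable (U i) μ01)
    (hV : ∀ i, Integrable (V i) μ01) (hV0 : ∀ i, ∀ᵐ t ∂μ01, 0 ≤ V i t)
    (hNZ : Nnorm Z ≤ ENNReal.ofReal ε)
    (hUV : ∀ i, IdentDistrib (U i) (V i) μ01 μ01)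
    (hU0 : ∀ i, ∀ᵐ t ∂μ01, 0 ≤ U i t)
    (hdom : ∀ᵐ t ∂μ01, Y t - Z t + ∑ i, V i t ≤ ∑ i, U i t)
    (A : Set ℝ) (hA : MeasurableSet A)
    (C : Set ℝ) (hCm : MeasurableSet C) (hAC : A ⊆ C)
    (hCb : ((m : ℝ≥0∞) + 1) * μ01 C ≤ 1 / ((2 : ℝ≥0∞) ^ n * (Nat.factorial n : ℝ≥0∞))) :
    ∃ C', MeasurableSet C' ∧ C ⊆ C' ∧ μ01 C' ≤ ((m : ℝ≥0∞) + 1) * μ01 C ∧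
      (∫ t in A, Y t ∂μ01) + (∫ t in C, ∑ i, U i t ∂μ01) - ε / ((n : ℝ) * 2 ^ n) ≤
        ∫ t in C', ∑ i, U i t ∂μ01 := by
  choose B hBm hBμ hBint using fun i =>
    transfer_lemma (U i) (V i) (hU i) (hV i) (hU0 i) (hUV i) C hCm
  set C' : Set ℝ := C ∪ ⋃ i, B i with hC'
  have hC'm : MeasurableSet C' := hCm.union (MeasurableSet.iUnion fun i => hBm i)
  have hμC' : μ01 C' ≤ ((m : ℝ≥0∞) + 1) * μ01 C := by
    calc μ01 C' ≤ μ01 C + μ01 (⋃ i, B i) := measure_union_le _ _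
      _ ≤ μ01 C + ∑ i : Fin m, μ01 (B i) := by
          gcongr
          calc μ01 (⋃ i, B i) ≤ ∑' i : Fin m, μ01 (B i) := measure_iUnion_le _
            _ = ∑ i : Fin m, μ01 (B i) := tsum_fintype _
      _ ≤ μ01 C + ∑ _i : Fin m, μ01 C := by
          exact add_le_add_right (Finset.sum_le_sum fun i _ => hBμ i) _
      _ = ((m : ℝ≥0∞) + 1) * μ01 C := by
          rw [Finset.sum_const, Finset.card_univ, Fintype.card_fin, nsmul_eq_mul]
          ring
  refine ⟨C', hC'm, Set.subset_union_left, hμC', ?_⟩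
  -- integrability of the sums
  have hUsum : Integrable (fun t => ∑ i, U i t) μ01 :=
    integrable_finset_sum _ fun i _ => hU i
  have hVsum : Integrable (fun t => ∑ i, V i t) μ01 :=
    integrable_finset_sum _ fun i _ => hV i
  have hZC' : (∫ t in C', Z t ∂μ01) ≤ ε / ((n : ℝ) * 2 ^ n) :=
    zbound Z hZ n hn ε hε hNZ C' hC'm (hμC'.trans hCb)
  have hYC' : (∫ t in A, Y t ∂μ01) ≤ ∫ t in C', Y t ∂μ01 :=
    setIntegral_mono_set hY.integrableOn (ae_restrict_of_ae hY0)
      (HasSubset.Subset.eventuallyLE (hAC.trans Set.subset_union_left))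
  have hVC' : ∀ i, (∫ t in B i, V i t ∂μ01) ≤ ∫ t in C', V i t ∂μ01 := fun i =>
    setIntegral_mono_set (hV i).integrableOn (ae_restrict_of_ae (hV0 i))
      (HasSubset.Subset.eventuallyLE ((Set.subset_iUnion B i).trans Set.subset_union_right))
  have hdomC' : (∫ t in C', Y t - Z t + ∑ i, V i t ∂μ01) ≤ ∫ t in C', ∑ i, U i t ∂μ01 :=
    integral_mono_ae (((hY.sub hZ).add hVsum).integrableOn) hUsum.integrableOn
      (ae_restrict_of_ae hdom)
  have hYZ : Integrable (fun t => Y t - Z t) μ01 := hY.sub hZ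
  have hsplit : (∫ t in C', Y t - Z t + ∑ i, V i t ∂μ01) =
      (∫ t in C', Y t ∂μ01) - (∫ t in C', Z t ∂μ01) + ∫ t in C', ∑ i, V i t ∂μ01 := by
    have h1 : (∫ t in C', Y t - Z t + ∑ i, V i t ∂μ01)
        = (∫ t in C', Y t - Z t ∂μ01) + ∫ t in C', ∑ i, V i t ∂μ01 :=
      integral_add hYZ.integrableOn hVsum.integrableOn
    have h2 : (∫ t in C', Y t - Z t ∂μ01) = (∫ t in C', Y t ∂μ01) - ∫ t in C', Z t ∂μ01 :=
      integral_sub hY.integrableOn hZ.integrableOn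
    rw [h1, h2]
  have hsumC : (∫ t in C, ∑ i, U i t ∂μ01) = ∑ i, ∫ t in C, U i t ∂μ01 :=
    integral_finset_sum _ fun i _ => (hU i).integrableOn
  have hsumC' : (∫ t in C', ∑ i, V i t ∂μ01) = ∑ i, ∫ t in C', V i t ∂μ01 :=
    integral_finset_sum _ fun i _ => (hV i).integrableOn
  have hsum_le : (∫ t in C, ∑ i, U i t ∂μ01) ≤ ∫ t in C', ∑ i, V i t ∂μ01 := by
    rw [hsumC, hsumC']
    apply Finset.sum_le_sum
    intro i _
    exact (hBint i).trans (hVC' i)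
  linarith

/-- Lemma 4.2 of the paper: the `k`-fold iterated mass-transfer estimate. -/
theorem iterated_estimate
    (m n k : ℕ) (hm : 1 ≤ m) (hn : 1 ≤ n) (hk : 1 ≤ k) (ε : ℝ) (hε : 0 < ε)
    (Y Z : ℝ → ℝ) (U V : Fin m → ℝ → ℝ)
    (hY : Integrable Y μ01) (hY0 : ∀ᵐ t ∂μ01, 0 ≤ Y t)
    (hZ : Integrable Z μ01) (hZ0 : ∀ᵐ t ∂μ01, 0 ≤ Z t)
    (hU : ∀ i, Integrable (U i) μ01) (hU0 : ∀ i, ∀ᵐ t ∂μ01, 0 ≤ U i t)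
    (hV : ∀ i, Integrable (V i) μ01) (hV0 : ∀ i, ∀ᵐ t ∂μ01, 0 ≤ V i t)
    (hNZ : Nnorm Z < ENNReal.ofReal ε)
    (hUV : ∀ i, IdentDistrib (U i) (V i) μ01 μ01)
    (hdom : ∀ᵐ t ∂μ01, Y t - Z t + ∑ i, V i t ≤ ∑ i, U i t)
    (A : Set ℝ) (hA : MeasurableSet A) (hA1 : A ⊆ Set.Icc (0 : ℝ) 1)
    (hPA : μ01 A ≤ 1 / (((m : ℝ≥0∞) + 1) ^ k * 2 ^ n * (Nat.factorial n : ℝ≥0∞))) :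
    ∃ A' : Set ℝ, MeasurableSet A' ∧ A ⊆ A' ∧
      μ01 A' ≤ ((m : ℝ≥0∞) + 1) ^ k * μ01 A ∧
      (k : ℝ) * (∫ t in A, Y t ∂μ01) + (∫ t in A, ∑ i, U i t ∂μ01)
          - (k : ℝ) * ε / (n * 2 ^ n) ≤
        ∫ t in A', ∑ i, U i t ∂μ01 := by
  have hNZ' : Nnorm Z ≤ ENNReal.ofReal ε := hNZ.le
  set P : ℝ≥0∞ := (m : ℝ≥0∞) + 1 with hP
  have hP1 : (1 : ℝ≥0∞) ≤ P := le_add_self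
  have hPtop : P ≠ ∞ := by
    rw [hP]; exact ENNReal.add_ne_top.mpr ⟨ENNReal.natCast_ne_top m, ENNReal.one_ne_top⟩
  have hP0 : P ≠ 0 := by rw [hP]; positivity
  have hcnz : ((2 : ℝ≥0∞) ^ n * (Nat.factorial n : ℝ≥0∞)) ≠ 0 := by
    apply mul_ne_zero
    · positivity
    · exact_mod_cast (Nat.factorial_pos n).ne'
  have hctop : ((2 : ℝ≥0∞) ^ n * (Nat.factorial n : ℝ≥0∞)) ≠ ∞ :=
    ENNReal.mul_ne_top (ENNReal.pow_ne_top ENNReal.ofNat_ne_top) (ENNReal.natCast_ne_top _)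
  have key : ∀ j : ℕ, j ≤ k → ∃ A' : Set ℝ, MeasurableSet A' ∧ A ⊆ A' ∧
      μ01 A' ≤ P ^ j * μ01 A ∧
      (j : ℝ) * (∫ t in A, Y t ∂μ01) + (∫ t in A, ∑ i, U i t ∂μ01)
          - (j : ℝ) * ε / ((n : ℝ) * 2 ^ n) ≤ ∫ t in A', ∑ i, U i t ∂μ01 := by
    intro j
    induction j with
    | zero =>
      intro _
      refine ⟨A, hA, subset_rfl, by simp, by norm_num⟩
    | succ j ih =>
      intro hjk
      obtain ⟨Aj, hAjm, hAAj, hAjμ, hAjint⟩ := ih (Nat.le_of_succ_le hjk)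
      have hpowle : P ^ (j + 1) ≤ P ^ k := pow_le_pow_right₀ hP1 hjk
      have hbound : P * μ01 Aj ≤ 1 / ((2 : ℝ≥0∞) ^ n * (Nat.factorial n : ℝ≥0∞)) := by
        have e1 : (1 : ℝ≥0∞) / (P ^ k * 2 ^ n * (Nat.factorial n : ℝ≥0∞)) =
            (P ^ k)⁻¹ * ((2 : ℝ≥0∞) ^ n * (Nat.factorial n : ℝ≥0∞))⁻¹ := by
          rw [one_div, mul_assoc, ENNReal.mul_inv (Or.inl (pow_ne_zero k hP0)) (Or.inr hcnz)]
        calc P * μ01 Aj ≤ P * (P ^ j * μ01 A) := mul_le_mul_right hAjμ _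
          _ = P ^ (j + 1) * μ01 A := by rw [pow_succ]; ring
          _ ≤ P ^ (j + 1) * (1 / (P ^ k * 2 ^ n * (Nat.factorial n : ℝ≥0∞))) :=
              mul_le_mul_right hPA _
          _ = P ^ (j + 1) * (P ^ k)⁻¹ *
              ((2 : ℝ≥0∞) ^ n * (Nat.factorial n : ℝ≥0∞))⁻¹ := by rw [e1, mul_assoc]
          _ ≤ P ^ k * (P ^ k)⁻¹ * ((2 : ℝ≥0∞) ^ n * (Nat.factorial n : ℝ≥0∞))⁻¹ := by
              gcongr
          _ = ((2 : ℝ≥0∞) ^ n * (Nat.factorial n : ℝ≥0∞))⁻¹ := by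
              rw [ENNReal.mul_inv_cancel (pow_ne_zero k hP0) (ENNReal.pow_ne_top hPtop),
                one_mul]
          _ = 1 / ((2 : ℝ≥0∞) ^ n * (Nat.factorial n : ℝ≥0∞)) := (one_div _).symm
      obtain ⟨A', hA'm, hAjA', hA'μ, hA'int⟩ :=
        step_lemma m n hn ε hε Y Z U V hY hY0 hZ hU hV hV0 hNZ' hUV hU0 hdom A hA
          Aj hAjm hAAj hbound
      refine ⟨A', hA'm, hAAj.trans hAjA', ?_, ?_⟩
      · calc μ01 A' ≤ P * μ01 Aj := hA'μ
          _ ≤ P * (P ^ j * μ01 A) := mul_le_mul_right hAjμ _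
          _ = P ^ (j + 1) * μ01 A := by rw [pow_succ]; ring
      · have hcast : ((j + 1 : ℕ) : ℝ) = (j : ℝ) + 1 := by push_cast; ring
        rw [hcast]
        have hr : ((j : ℝ) + 1) * ε / ((n : ℝ) * 2 ^ n) =
            (j : ℝ) * ε / ((n : ℝ) * 2 ^ n) + ε / ((n : ℝ) * 2 ^ n) := by ring
        rw [hr]
        linarith
  obtain ⟨A', h1, h2, h3, h4⟩ := key k le_rfl
  exact ⟨A', h1, h2, h3, h4⟩
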